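/- arXiv:1907.09736 — 3 statements merged into one kernel-verified Lean document; each statement's English description precedes it below -/
import Mathlib

section
/- Let R be a commutative ring and let I_•, A_• be equivalent filtrations of R, each of which satisfies: for every N there exist Ñ ∈ ℕ and a finite subset {q_1,…,q_r} of the N-th ideal of the filtration such that the (N+Ñ)-th ideal of the filtration is contained in the ideal (q_1,…,q_r). Then R has the Artin approximation property for I_• if and only if R has the Artin approximation property for A_•. -/
/-- `R` has the Artin approximation property for the filtration `I`. -/
def HasAP {R : Type*} [CommRing R] (I : ℕ → Ideal R) : Prop :=
  ∀ (n s : ℕ) (F : Fin s → MvPolynomial (Fin n) R) (yhat : ℕ → Fin n → R),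
    (∀ N i, yhat (N + 1) i - yhat N i ∈ I (N + 1)) →
    (∀ N k, MvPolynomial.eval (yhat N) (F k) ∈ I (N + 1)) →
    ∀ N, ∃ y : Fin n → R,
      (∀ k, MvPolynomial.eval y (F k) = 0) ∧ ∀ i, y i - yhat N i ∈ I (N + 1)

/-- Two filtrations are equivalent: each is cofinally contained in the other. -/
def FiltEquiv {R : Type*} [CommRing R] (I A : ℕ → Ideal R) : Prop :=
  ∀ j : ℕ, (∃ j', I j' ≤ A j) ∧ (∃ j'', A j'' ≤ I j)

/-- The weak finite-generation condition on a filtration: for every `N` there are `N'` and a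
finite subset `{q_1, …, q_r}` of the `N`-th ideal with the `(N+N')`-th ideal contained in the
ideal generated by the `q`'s. -/
def WeakFG {R : Type*} [CommRing R] (A : ℕ → Ideal R) : Prop :=
  ∀ N : ℕ, ∃ (N' r : ℕ) (q : Fin r → R),
    (∀ t, q t ∈ A N) ∧ A (N + N') ≤ Ideal.span (Set.range q)

/-!
A formal solution for `A_•`, read along a sparse enough subsequence `φ` (one with
`A_{φ(M)+1} ⊆ I_{M+1}`), is a formal solution for `I_•`. A true solution that approximates it
at a deep enough `I`-level is then also close to the original formal solution at any prescribed
`A`-level, since the terms of a formal solution form a Cauchy sequence for `A_•`.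
-/

section

variable {R : Type*} [CommRing R]

lemma sub_mem_of_succ_sub_mem {A : ℕ → Ideal R} (hA : Antitone A) {x : ℕ → R}
    (hx : ∀ N, x (N + 1) - x N ∈ A (N + 1)) {a b : ℕ} (hab : a ≤ b) :
    x b - x a ∈ A (a + 1) := by
  induction b, hab using Nat.le_induction with
  | base => simp
  | succ b hab ih =>
    rw [← sub_add_sub_cancel]
    exact Ideal.add_mem _ (hA (by omega) (hx b)) ih

lemma exists_strictMono_le_of_cofinal {α : Type*} [Preorder α] {I A : ℕ → α}
    (hA : Antitone A) (hAI : ∀ j, ∃ j', A j' ≤ I j) (N : ℕ) :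
    ∃ φ : ℕ → ℕ, StrictMono φ ∧ ∀ M, N ≤ φ M ∧ A (φ M + 1) ≤ I (M + 1) := by
  refine Filter.extraction_forall_of_eventually'
    (P := fun M k => N ≤ k ∧ A (k + 1) ≤ I (M + 1)) fun M => ?_
  obtain ⟨j', hj'⟩ := hAI (M + 1)
  exact ⟨max N j', fun k hk => ⟨le_of_max_le_left hk, (hA (by omega)).trans hj'⟩⟩

lemma FiltEquiv.symm {I A : ℕ → Ideal R} (h : FiltEquiv I A) : FiltEquiv A I :=
  fun j => (h j).symm

theorem HasAP.of_filtEquiv {I A : ℕ → Ideal R} (hI : Antitone I) (hA : Antitone A)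
    (hIA : FiltEquiv I A) (hAP : HasAP I) : HasAP A := by
  intro n s F yhat hy hF N
  obtain ⟨φ, hφ, hφIA⟩ := exists_strictMono_le_of_cofinal hA (fun j => (hIA j).2) N
  have hcauchy : ∀ {a b} i, a ≤ b → yhat b i - yhat a i ∈ A (a + 1) :=
    fun i hab => sub_mem_of_succ_sub_mem hA (x := (yhat · i)) (fun N => hy N i) hab
  have hformal_step : ∀ M i, yhat (φ (M + 1)) i - yhat (φ M) i ∈ I (M + 1) :=
    fun M i => (hφIA M).2 (hcauchy i (hφ.monotone M.le_succ))
  have hformal_eval : ∀ M k, MvPolynomial.eval (yhat (φ M)) (F k) ∈ I (M + 1) :=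
    fun M k => (hφIA M).2 (hF (φ M) k)
  obtain ⟨j, hj⟩ := (hIA (N + 1)).1
  obtain ⟨y, hyF, hyclose⟩ := hAP n s F (yhat ∘ φ) hformal_step hformal_eval j
  refine ⟨y, hyF, fun i => ?_⟩
  rw [← sub_add_sub_cancel _ (yhat (φ j) i)]
  exact Ideal.add_mem _ (hj (hI j.le_succ (hyclose i))) (hcauchy i (hφIA j).1)

end

theorem hasAP_iff_of_filtEquiv_general
    {R : Type*} [CommRing R] (I A : ℕ → Ideal R)
    (hIanti : Antitone I)
    (hAanti : Antitone A)
    (hequiv : FiltEquiv I A) :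
    HasAP I ↔ HasAP A :=
  ⟨HasAP.of_filtEquiv hIanti hAanti hequiv, HasAP.of_filtEquiv hAanti hIanti hequiv.symm⟩

/-- For equivalent filtrations `I_•` and `A_•`, each satisfying the weak
finite-generation condition, `R` has AP for `I_•` iff it has AP for `A_•`. -/
theorem hasAP_iff_of_filtEquiv
    {R : Type*} [CommRing R] (I A : ℕ → Ideal R)
    (hI0 : I 0 = ⊤) (hIanti : Antitone I)
    (hA0 : A 0 = ⊤) (hAanti : Antitone A)
    (hequiv : FiltEquiv I A)
    (hIfg : WeakFG I) (hAfg : WeakFG A) :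
    HasAP I ↔ HasAP A :=
  hasAP_iff_of_filtEquiv_general I A hIanti hAanti hequiv
end

section
/- Let U ⊆ ℝ^m be open and Z ⊆ U a subset that is closed in U and discrete. For every function a : Z × ℕ^m → ℝ there exists f ∈ C^∞(U) such that for every z ∈ Z and every multi-index k ∈ ℕ^m the partial derivative ∂^k f(z) equals a(z,k). -/
/-! Borel's lemma at one point: let `ψ_k` be a fixed bump function times the monomial `x ^ k`.
The series `∑ₖ (aₖ / k!) εₖ ^ |k| ψ_k(x / εₖ)` converges together with all its derivatives once
`εₖ` is so small that the derivatives of order below `|k|` of its `k`-th term are bounded by a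
summable sequence, the higher orders involving only finitely many terms. Near `0` the `k`-th term
is `(aₖ / k!) x ^ k`, so the sum has derivatives `aₖ` at `0`.

For the multipoint version, choose radii `ρ_z ≤ 1` with `2 ρ_z` at most the distance from `z` to
the rest of `Z`, and add up the one-point solutions supported in the balls `B(z, ρ_z)`. The sum
agrees with the `z`-th one near `z`. Near a point `x ∈ U`, which has a neighbourhood containing no
point of `Z` other than itself, only finitely many balls appear: those centred away from `x` have
radius bounded below, so their centres form a bounded separated subset of `Z`. -/

open Filter Topology

noncomputable section

/-- The partial derivative in the direction of the `j`-th coordinate. -/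
def pderivCoord {n : ℕ} (j : Fin n) (g : (Fin n → ℝ) → ℝ) : (Fin n → ℝ) → ℝ :=
  fun y => fderiv ℝ g y (Pi.single j 1)

/-- The iterated partial derivative `∂^k` associated to the multi-index `k : Fin n → ℕ`. -/
def pderivMulti {n : ℕ} (k : Fin n → ℕ) (g : (Fin n → ℝ) → ℝ) : (Fin n → ℝ) → ℝ :=
  (List.finRange n).foldr (fun j h => (pderivCoord j)^[k j] h) g

open Metric
open scoped ContDiff

variable {m : ℕ}

theorem pderivMulti_induction {p : (((Fin m → ℝ) → ℝ) → (Fin m → ℝ) → ℝ) → Prop}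
    (h_id : p id) (h_comp : ∀ j D, p D → p (pderivCoord j ∘ D)) (k : Fin m → ℕ) :
    p (pderivMulti k) := by
  suffices ∀ l : List (Fin m), p fun g => l.foldr (fun j h => (pderivCoord j)^[k j] h) g from
    this _
  intro l
  induction l with
  | nil => exact h_id
  | cons j l ih =>
    change p ((pderivCoord j)^[k j] ∘ _)
    induction k j with
    | zero => exact ih
    | succ n ihn => rw [Function.iterate_succ', Function.comp_assoc]; exact h_comp j _ ihn

theorem ContDiff.pderivCoord {f : (Fin m → ℝ) → ℝ} (hf : ContDiff ℝ ∞ f) (j : Fin m) :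
    ContDiff ℝ ∞ (pderivCoord j f) :=
  (hf.fderiv_right (m := ∞) le_rfl).clm_apply contDiff_const

theorem Filter.EventuallyEq.pderivCoord {f g : (Fin m → ℝ) → ℝ} {x : Fin m → ℝ}
    (h : f =ᶠ[𝓝 x] g) (j : Fin m) : pderivCoord j f =ᶠ[𝓝 x] pderivCoord j g :=
  (h.fderiv (𝕜 := ℝ)).mono fun y hy => by simp only [_root_.pderivCoord, hy]

theorem Filter.EventuallyEq.pderivMulti {f g : (Fin m → ℝ) → ℝ} {x : Fin m → ℝ}
    (h : f =ᶠ[𝓝 x] g) (k : Fin m → ℕ) : pderivMulti k f =ᶠ[𝓝 x] pderivMulti k g :=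
  pderivMulti_induction (p := fun D => ∀ f g, f =ᶠ[𝓝 x] g → D f =ᶠ[𝓝 x] D g)
    (fun _ _ h => h) (fun j _ hD f g h => (hD f g h).pderivCoord j) k f g h

theorem pderivCoord_const_smul (j : Fin m) (c : ℝ) (f : (Fin m → ℝ) → ℝ) :
    pderivCoord j (c • f) = c • pderivCoord j f := by
  funext y
  simp [pderivCoord, fderiv_const_smul_field]

theorem pderivCoord_comp_sub (j : Fin m) (f : (Fin m → ℝ) → ℝ) (z : Fin m → ℝ) :
    pderivCoord j (fun y => f (y - z)) = fun y => pderivCoord j f (y - z) := by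
  funext y
  simp [pderivCoord, fderiv_comp_sub]

theorem pderivMulti_comp_sub (k : Fin m → ℕ) (f : (Fin m → ℝ) → ℝ) (z : Fin m → ℝ) :
    pderivMulti k (fun y => f (y - z)) = fun y => pderivMulti k f (y - z) :=
  pderivMulti_induction (p := fun D => ∀ f, D (fun y => f (y - z)) = fun y => D f (y - z))
    (fun _ => rfl)
    (fun j D hD f => by simp only [Function.comp_apply, hD, pderivCoord_comp_sub]) k f

theorem norm_iteratedFDeriv_pderivCoord_le {f : (Fin m → ℝ) → ℝ} (hf : ContDiff ℝ ∞ f)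
    (j : Fin m) (N : ℕ) (x : Fin m → ℝ) :
    ‖iteratedFDeriv ℝ N (pderivCoord j f) x‖ ≤ ‖iteratedFDeriv ℝ (N + 1) f x‖ := by
  set e := ContinuousLinearMap.apply ℝ ℝ (Pi.single j 1 : Fin m → ℝ)
  have he : ‖e‖ ≤ 1 :=
    ContinuousLinearMap.opNorm_le_bound _ zero_le_one fun L => by
      simpa [e, Pi.norm_single] using L.le_opNorm (Pi.single j 1 : Fin m → ℝ)
  change ‖iteratedFDeriv ℝ N (e ∘ fderiv ℝ f) x‖ ≤ _
  rw [e.iteratedFDeriv_comp_left (hf.fderiv_right (m := ∞) le_rfl).contDiffAt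
    (by exact_mod_cast le_top), ← norm_iteratedFDeriv_fderiv]
  exact (e.norm_compContinuousMultilinearMap_le _).trans
    (mul_le_of_le_one_left (norm_nonneg _) he)

def HasSummableDerivBounds {ι : Type*} (F : ι → (Fin m → ℝ) → ℝ) : Prop :=
  (∀ i, ContDiff ℝ ∞ (F i)) ∧
    ∀ N : ℕ, ∃ v : ι → ℝ, Summable v ∧ ∀ i x, ‖iteratedFDeriv ℝ N (F i) x‖ ≤ v i

namespace HasSummableDerivBounds

variable {ι : Type*} {F : ι → (Fin m → ℝ) → ℝ}

theorem pderivCoord (hF : HasSummableDerivBounds F) (j : Fin m) :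
    HasSummableDerivBounds fun i => pderivCoord j (F i) := by
  refine ⟨fun i => (hF.1 i).pderivCoord j, fun N => ?_⟩
  obtain ⟨v, hv, hle⟩ := hF.2 (N + 1)
  exact ⟨v, hv, fun i x => (norm_iteratedFDeriv_pderivCoord_le (hF.1 i) j N x).trans (hle i x)⟩

theorem pderivCoord_tsum (hF : HasSummableDerivBounds F) (j : Fin m) :
    _root_.pderivCoord j (fun x => ∑' i, F i x) = fun x => ∑' i, _root_.pderivCoord j (F i) x := by
  obtain ⟨v, hv, hle⟩ := hF.2 1
  have hfderiv : ∀ i x, ‖fderiv ℝ (F i) x‖ ≤ v i := fun i x => by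
    simpa [← norm_iteratedFDeriv_fderiv (n := 0)] using hle i x
  obtain ⟨v₀, hv₀, hle₀⟩ := hF.2 0
  have hsum : ∀ x, Summable fun i => F i x := fun x =>
    hv₀.of_norm_bounded fun i => by simpa using hle₀ i x
  funext x
  rw [_root_.pderivCoord, fderiv_tsum_apply hv (fun i => (hF.1 i).differentiable (by simp))
    hfderiv (hsum 0)]
  exact (ContinuousLinearMap.apply ℝ ℝ _).map_tsum (hv.of_norm_bounded fun i => hfderiv i x)

theorem pderivMulti_tsum (hF : HasSummableDerivBounds F) (k : Fin m → ℕ) :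
    pderivMulti k (fun x => ∑' i, F i x) = fun x => ∑' i, pderivMulti k (F i) x :=
  (pderivMulti_induction (p := fun D => ∀ F : ι → (Fin m → ℝ) → ℝ, HasSummableDerivBounds F →
      HasSummableDerivBounds (fun i => D (F i)) ∧
        D (fun x => ∑' i, F i x) = fun x => ∑' i, D (F i) x)
    (fun _ hF => ⟨hF, rfl⟩)
    (fun j D hD F hF => by
      obtain ⟨hDF, heq⟩ := hD F hF
      exact ⟨hDF.pderivCoord j, by simp only [Function.comp_apply, heq, hDF.pderivCoord_tsum]⟩)
    k F hF).2

theorem contDiff_tsum (hF : HasSummableDerivBounds F) :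
    ContDiff ℝ ∞ fun x => ∑' i, F i x := by
  choose v hv hle using hF.2
  exact _root_.contDiff_tsum hF.1 (fun N _ => hv N) (fun N i x _ => hle N i x)

end HasSummableDerivBounds

def monom (k : Fin m → ℕ) (x : Fin m → ℝ) : ℝ := ∏ i, x i ^ k i

theorem contDiff_monom (k : Fin m → ℕ) : ContDiff ℝ ∞ (monom k) :=
  contDiff_prod fun i _ => (contDiff_apply ℝ ℝ i).pow (k i)

theorem monom_update_apply (k : Fin m → ℕ) (j : Fin m) (n : ℕ)
    (x : Fin m → ℝ) :
    monom (Function.update k j n) x = x j ^ n * ∏ i ∈ Finset.univ.erase j, x i ^ k i := by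
  rw [monom, ← Finset.mul_prod_erase _ _ (Finset.mem_univ j), Function.update_self]
  congr 1
  exact Finset.prod_congr rfl fun i hi => by rw [Function.update_of_ne (Finset.ne_of_mem_erase hi)]

theorem pderivCoord_monom (j : Fin m) (k : Fin m → ℕ) :
    pderivCoord j (monom k) = (k j : ℝ) • monom (Function.update k j (k j - 1)) := by
  funext x
  have hderiv := HasFDerivAt.finsetProd (u := Finset.univ) (g := fun i (y : Fin m → ℝ) => y i ^ k i)
    (x := x) fun i _ => (hasDerivAt_pow (k i) (x i)).comp_hasFDerivAt x
      (hasFDerivAt_apply (𝕜 := ℝ) i x)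
  rw [pderivCoord, show monom k = fun x => ∏ i, x i ^ k i from rfl, hderiv.fderiv,
    FunLike.coe_sum, Finset.sum_apply,
    Finset.sum_eq_single j (fun i _ hij => by simp [hij]) (by simp)]
  simp [monom_update_apply]
  ring

theorem iterate_pderivCoord_smul_monom (j : Fin m) (n : ℕ) (c : ℝ) (k : Fin m → ℕ) :
    (pderivCoord j)^[n] (c • monom k) =
      (c * (k j).descFactorial n) • monom (Function.update k j (k j - n)) := by
  induction n with
  | zero => simp
  | succ n ih =>
    rw [Function.iterate_succ_apply', ih, pderivCoord_const_smul, pderivCoord_monom,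
      Function.update_self, Function.update_idem, smul_smul, Nat.descFactorial_succ,
      Nat.sub_sub]
    push_cast
    ring_nf

theorem foldr_iterate_pderivCoord_smul_monom (idx : Fin m → ℕ) (c : ℝ) (k : Fin m → ℕ)
    {l : List (Fin m)} (hl : l.Nodup) :
    l.foldr (fun j h => (pderivCoord j)^[idx j] h) (c • monom k) =
      (c * (l.map fun j => ((k j).descFactorial (idx j) : ℝ)).prod) •
        monom (fun i => if i ∈ l then k i - idx i else k i) := by
  induction l with
  | nil => simp
  | cons j l ih =>
    obtain ⟨hj, hl⟩ := List.nodup_cons.mp hl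
    rw [List.foldr_cons, ih hl, iterate_pderivCoord_smul_monom]
    simp only [hj, if_false, List.map_cons, List.prod_cons]
    congr 1
    · ring
    · congr 1
      funext i
      by_cases hij : i = j
      · subst hij; simp [hj]
      · simp [hij]

theorem pderivMulti_smul_monom (idx : Fin m → ℕ) (c : ℝ) (k : Fin m → ℕ) :
    pderivMulti idx (c • monom k) =
      (c * ∏ i, ((k i).descFactorial (idx i) : ℝ)) • monom (k - idx) := by
  rw [pderivMulti, foldr_iterate_pderivCoord_smul_monom _ _ _ (List.nodup_finRange m),
    ← Fin.prod_univ_def]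
  simp only [List.mem_finRange, if_true]
  rfl

theorem monom_zero_apply (k : Fin m → ℕ) : monom k 0 = if k = 0 then 1 else 0 := by
  split_ifs with hk
  · simp [monom, hk]
  · obtain ⟨i, hi⟩ := Function.ne_iff.mp hk
    exact Finset.prod_eq_zero (Finset.mem_univ i) (zero_pow hi)

theorem pderivMulti_smul_monom_zero (idx : Fin m → ℕ) (c : ℝ) (k : Fin m → ℕ) :
    pderivMulti idx (c • monom k) 0 = if k = idx then c * ∏ i, ((k i).factorial : ℝ) else 0 := by
  rw [pderivMulti_smul_monom, Pi.smul_apply, monom_zero_apply, smul_eq_mul]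
  split_ifs with hsub hk hk
  · simp [hk, Nat.descFactorial_self]
  · obtain ⟨i, hi⟩ := Function.ne_iff.mp hk
    have hlt : k i < idx i := lt_of_le_of_ne (tsub_eq_zero_iff_le.mp (congrFun hsub i)) hi
    have hzero : ((k i).descFactorial (idx i) : ℝ) = 0 := by
      exact_mod_cast Nat.descFactorial_eq_zero_iff_lt.mpr hlt
    have hprod : ∏ j, ((k j).descFactorial (idx j) : ℝ) = 0 :=
      Finset.prod_eq_zero (Finset.mem_univ i) hzero
    simp [hprod]
  · simp [hk] at hsub
  · simp

theorem ContDiff.exists_bound_iteratedFDeriv {E F : Type*} [NormedAddCommGroup E]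
    [NormedSpace ℝ E] [NormedAddCommGroup F] [NormedSpace ℝ F] {f : E → F} (hf : ContDiff ℝ ∞ f)
    (hcs : HasCompactSupport f) (N : ℕ) : ∃ C, ∀ x, ‖iteratedFDeriv ℝ N f x‖ ≤ C :=
  (hf.continuous_iteratedFDeriv (by exact_mod_cast le_top)).bounded_above_of_compact_support
    (hcs.iteratedFDeriv N)

def unitBump (m : ℕ) : ContDiffBump (0 : Fin m → ℝ) := ⟨1, 2, one_pos, one_lt_two⟩

def bumpMonom (k : Fin m → ℕ) (x : Fin m → ℝ) : ℝ := monom k x * unitBump m x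

theorem contDiff_bumpMonom (k : Fin m → ℕ) : ContDiff ℝ ∞ (bumpMonom k) :=
  (contDiff_monom k).mul (ContDiffBump.contDiff _)

theorem hasCompactSupport_bumpMonom (k : Fin m → ℕ) : HasCompactSupport (bumpMonom k) :=
  (ContDiffBump.hasCompactSupport _).mul_left

theorem support_bumpMonom_subset (k : Fin m → ℕ) :
    Function.support (bumpMonom k) ⊆ ball 0 2 :=
  (Function.support_mul_subset_right _ _).trans (ContDiffBump.support_eq _).subset

theorem bumpMonom_eqOn_monom (k : Fin m → ℕ) : Set.EqOn (bumpMonom k) (monom k) (closedBall 0 1) :=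
  fun _ hx => by simp [bumpMonom, (unitBump m).one_of_mem_closedBall hx]

def scaledBumpMonom (k : Fin m → ℕ) (ε : ℝ) (x : Fin m → ℝ) : ℝ :=
  ε ^ (∑ i, k i) * bumpMonom k (ε⁻¹ • x)

theorem contDiff_scaledBumpMonom (k : Fin m → ℕ) (ε : ℝ) : ContDiff ℝ ∞ (scaledBumpMonom k ε) :=
  contDiff_const.mul ((contDiff_bumpMonom k).comp (contDiff_const_smul ε⁻¹))

theorem support_scaledBumpMonom_subset (k : Fin m → ℕ) {ε : ℝ} (hε : 0 < ε) :
    Function.support (scaledBumpMonom k ε) ⊆ ball 0 (2 * ε) := by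
  intro x hx
  have h := support_bumpMonom_subset k (Function.support_mul_subset_right (fun _ => ε ^ ∑ i, k i)
    (fun x => bumpMonom k (ε⁻¹ • x)) hx)
  rw [mem_ball_zero_iff, norm_smul, Real.norm_of_nonneg (inv_pos.2 hε).le] at h
  rw [mem_ball_zero_iff]
  rwa [inv_mul_lt_iff₀ hε, mul_comm] at h

theorem hasCompactSupport_scaledBumpMonom (k : Fin m → ℕ) {ε : ℝ} (hε : 0 < ε) :
    HasCompactSupport (scaledBumpMonom k ε) :=
  HasCompactSupport.intro' (isCompact_closedBall 0 (2 * ε)) isClosed_closedBall fun _ hx =>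
    Function.notMem_support.mp fun h =>
      hx (ball_subset_closedBall (support_scaledBumpMonom_subset k hε h))

theorem scaledBumpMonom_eventuallyEq_monom (k : Fin m → ℕ) {ε : ℝ} (hε : 0 < ε) :
    scaledBumpMonom k ε =ᶠ[𝓝 0] monom k := by
  filter_upwards [ball_mem_nhds 0 hε] with x hx
  have hx' : ε⁻¹ • x ∈ closedBall 0 1 := by
    rw [mem_closedBall_zero_iff, norm_smul, Real.norm_of_nonneg (inv_pos.2 hε).le,
      inv_mul_le_iff₀ hε, mul_one]
    exact (mem_ball_zero_iff.mp hx).le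
  rw [scaledBumpMonom, bumpMonom_eqOn_monom k hx', monom, monom, ← Finset.prod_pow_eq_pow_sum,
    ← Finset.prod_mul_distrib]
  refine Finset.prod_congr rfl fun i _ => ?_
  rw [Pi.smul_apply, smul_eq_mul, mul_pow, ← mul_assoc, ← mul_pow, mul_inv_cancel₀ hε.ne',
    one_pow, one_mul]

theorem norm_iteratedFDeriv_scaledBumpMonom_le (k : Fin m → ℕ) {ε : ℝ} (hε : 0 < ε) {N : ℕ}
    (hN : N ≤ ∑ i, k i) {B : ℝ} (hB : ∀ y, ‖iteratedFDeriv ℝ N (bumpMonom k) y‖ ≤ B)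
    (x : Fin m → ℝ) :
    ‖iteratedFDeriv ℝ N (scaledBumpMonom k ε) x‖ ≤ ε ^ (∑ i, k i - N) * B := by
  have hscale : scaledBumpMonom k ε = ε ^ (∑ i, k i) • fun x => bumpMonom k (ε⁻¹ • x) := rfl
  have hsmooth : ContDiff ℝ ∞ fun x => bumpMonom k (ε⁻¹ • x) :=
    (contDiff_bumpMonom k).comp (contDiff_const_smul ε⁻¹)
  rw [hscale, iteratedFDeriv_const_smul_apply (hsmooth.of_le (by exact_mod_cast le_top)).contDiffAt,
    iteratedFDeriv_comp_const_smul _ ((contDiff_bumpMonom k).of_le (by exact_mod_cast le_top)),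
    norm_smul, norm_smul, norm_pow, norm_pow, Real.norm_of_nonneg hε.le,
    Real.norm_of_nonneg (inv_pos.2 hε).le, ← mul_assoc, inv_pow,
    ← pow_sub₀ _ hε.ne' hN]
  exact mul_le_mul_of_nonneg_left (hB _) (by positivity)

theorem eventually_norm_iteratedFDeriv_smul_scaledBumpMonom_le (c : ℝ) (k : Fin m → ℕ) {N : ℕ}
    (hN : N < ∑ i, k i) {u : ℝ} (hu : 0 < u) :
    ∀ᶠ ε in 𝓝[>] 0, ∀ x, ‖iteratedFDeriv ℝ N (c • scaledBumpMonom k ε) x‖ ≤ u := by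
  obtain ⟨B, hB⟩ := (contDiff_bumpMonom k).exists_bound_iteratedFDeriv
    (hasCompactSupport_bumpMonom k) N
  have hlim : Tendsto (fun ε : ℝ => |c| * (ε ^ (∑ i, k i - N) * B)) (𝓝 0) (𝓝 0) := by
    simpa [zero_pow (Nat.sub_ne_zero_of_lt hN)] using
      (((continuous_pow (∑ i, k i - N)).mul continuous_const).const_mul |c|).tendsto 0
  filter_upwards [nhdsWithin_le_nhds (hlim.eventually (ge_mem_nhds hu)), self_mem_nhdsWithin]
    with ε hε hεpos x
  rw [iteratedFDeriv_const_smul_apply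
      ((contDiff_scaledBumpMonom k ε).of_le (by exact_mod_cast le_top)).contDiffAt,
    norm_smul, Real.norm_eq_abs]
  exact (mul_le_mul_of_nonneg_left (norm_iteratedFDeriv_scaledBumpMonom_le k hεpos hN.le hB x)
    (abs_nonneg c)).trans hε

theorem exists_scale_smul_scaledBumpMonom (c : ℝ) (k : Fin m → ℕ) {u : ℝ} (hu : 0 < u) {r : ℝ}
    (hr : 0 < r) : ∃ ε, 0 < ε ∧ 2 * ε < r ∧
      ∀ N < ∑ i, k i, ∀ x, ‖iteratedFDeriv ℝ N (c • scaledBumpMonom k ε) x‖ ≤ u := by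
  have hsmall := (eventually_all_finset (Finset.range (∑ i, k i))).2 fun N hN =>
    eventually_norm_iteratedFDeriv_smul_scaledBumpMonom_le c k (Finset.mem_range.1 hN) hu
  have hsupp : ∀ᶠ ε in 𝓝[>] (0 : ℝ), 2 * ε < r := nhdsWithin_le_nhds <|
    ((continuous_const_mul 2).tendsto' 0 0 (mul_zero 2)).eventually (gt_mem_nhds hr)
  obtain ⟨ε, hpos, hεr, hε⟩ := (eventually_mem_nhdsWithin.and (hsupp.and hsmall)).exists
  exact ⟨ε, hpos, hεr, fun N hN => hε N (Finset.mem_range.2 hN)⟩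

theorem hasSummableDerivBounds_smul_scaledBumpMonom {a ε u : (Fin m → ℕ) → ℝ}
    (hε : ∀ k, 0 < ε k) (hu : Summable u)
    (hsmall : ∀ k, ∀ N < ∑ i, k i, ∀ x,
      ‖iteratedFDeriv ℝ N (a k • scaledBumpMonom k (ε k)) x‖ ≤ u k) :
    HasSummableDerivBounds fun k => a k • scaledBumpMonom k (ε k) := by
  have hsmooth : ∀ k, ContDiff ℝ ∞ (a k • scaledBumpMonom k (ε k)) := fun k =>
    (contDiff_scaledBumpMonom k (ε k)).const_smul (a k)
  refine ⟨hsmooth, fun N => ?_⟩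
  choose C hC using fun k => (hsmooth k).exists_bound_iteratedFDeriv
    ((hasCompactSupport_scaledBumpMonom k (hε k)).mono (Function.support_const_smul_subset _ _)) N
  have hfin : {k : Fin m → ℕ | ∑ i, k i ≤ N}.Finite :=
    (Set.finite_Iic fun _ => N).subset fun k hk i =>
      (Finset.single_le_sum (fun _ _ => Nat.zero_le _) (Finset.mem_univ i)).trans hk
  refine ⟨fun k => if ∑ i, k i ≤ N then C k else u k, hu.congr_cofinite ?_, fun k x => ?_⟩
  · filter_upwards [hfin.compl_mem_cofinite] with k hk
    exact (if_neg hk).symm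
  · dsimp only
    split_ifs with hk
    · exact hC k x
    · exact hsmall k N (not_le.mp hk) x

theorem pderivMulti_smul_scaledBumpMonom_zero (idx : Fin m → ℕ) (c : ℝ) (k : Fin m → ℕ) {ε : ℝ}
    (hε : 0 < ε) : pderivMulti idx (c • scaledBumpMonom k ε) 0 =
      if k = idx then c * ∏ i, ((k i).factorial : ℝ) else 0 := by
  have hloc : c • scaledBumpMonom k ε =ᶠ[𝓝 0] c • monom k :=
    (scaledBumpMonom_eventuallyEq_monom k hε).const_smul c
  rw [(hloc.pderivMulti idx).eq_of_nhds, pderivMulti_smul_monom_zero]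

theorem exists_borel_at_zero (c : (Fin m → ℕ) → ℝ) {r : ℝ} (hr : 0 < r) :
    ∃ φ : (Fin m → ℝ) → ℝ, ContDiff ℝ ∞ φ ∧ Function.support φ ⊆ ball 0 r ∧
      ∀ k, pderivMulti k φ 0 = c k := by
  obtain ⟨u, hupos, _, hu, -⟩ := posSumOfEncodable one_pos (Fin m → ℕ)
  set a : (Fin m → ℕ) → ℝ := fun k => c k / ∏ i, ((k i).factorial : ℝ)
  choose ε hεpos hεr hsmall using fun k => exists_scale_smul_scaledBumpMonom (a k) k (hupos k) hr
  have hF := hasSummableDerivBounds_smul_scaledBumpMonom hεpos hu.summable hsmall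
  refine ⟨_, hF.contDiff_tsum, Function.support_subset_iff'.2 fun x hx => ?_, fun idx => ?_⟩
  · have hzero : ∀ k, (a k • scaledBumpMonom k (ε k)) x = 0 := fun k =>
      Function.notMem_support.mp fun h => hx <| ball_subset_ball (hεr k).le <|
        support_scaledBumpMonom_subset k (hεpos k) (Function.support_const_smul_subset _ _ h)
    simp [hzero]
  · rw [hF.pderivMulti_tsum]
    simp only [pderivMulti_smul_scaledBumpMonom_zero _ _ _ (hεpos _)]
    rw [tsum_ite_eq]
    exact div_mul_cancel₀ _ (Finset.prod_ne_zero_iff.2 fun i _ => by positivity)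

theorem exists_borel_at (z : Fin m → ℝ) (c : (Fin m → ℕ) → ℝ) {r : ℝ} (hr : 0 < r) :
    ∃ φ : (Fin m → ℝ) → ℝ, ContDiff ℝ ∞ φ ∧ Function.support φ ⊆ ball z r ∧
      ∀ k, pderivMulti k φ z = c k := by
  obtain ⟨φ, hφ, hsupp, hder⟩ := exists_borel_at_zero c hr
  refine ⟨fun x => φ (x - z), hφ.comp (contDiff_id.sub contDiff_const), fun x hx => ?_,
    fun k => ?_⟩
  · simpa [dist_eq_norm] using hsupp hx
  · simp only [pderivMulti_comp_sub, sub_self, hder]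

section Gluing

variable {E : Type*} [NormedAddCommGroup E] {Z : Set E}

theorem IsDiscrete.exists_pos_eq_of_dist_lt (hZ : IsDiscrete Z) {x : E}
    (hx : x ∈ closure Z → x ∈ Z) : ∃ ε > 0, ∀ z ∈ Z, dist z x < ε → z = x := by
  by_cases hxZ : x ∈ Z
  · obtain ⟨ε, hε, hball⟩ := exists_ball_inter_eq_singleton_of_mem_discrete hZ hxZ
    exact ⟨ε, hε, fun z hz hzx => hball.subset ⟨mem_ball.2 hzx, hz⟩⟩
  · have hxZ' : x ∉ closure Z := fun h => hxZ (hx h)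
    obtain ⟨ε, hε, hfar⟩ : ∃ ε > 0, ∀ z ∈ Z, ε ≤ dist x z := by
      simpa [Metric.mem_closure_iff] using hxZ'
    exact ⟨ε, hε, fun z hz hzx => absurd (hfar z hz) (by rw [dist_comm]; exact not_le.2 hzx)⟩

theorem IsDiscrete.exists_separating_radius (hZ : IsDiscrete Z) :
    ∃ ρ : Z → ℝ, ∀ z, 0 < ρ z ∧ ρ z ≤ 1 ∧ ∀ z' : Z, z ≠ z' → 2 * ρ z ≤ dist (z : E) z' := by
  choose ε hε hiso using fun z : Z => hZ.exists_pos_eq_of_dist_lt fun _ => z.2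
  refine ⟨fun z => min 1 (ε z / 2), fun z =>
    ⟨lt_min one_pos (half_pos (hε z)), min_le_left _ _, fun z' hzz' => ?_⟩⟩
  have hfar : ε z ≤ dist (z' : E) z :=
    not_lt.1 fun h => hzz' (Subtype.ext (hiso z z' z'.2 h)).symm
  rw [dist_comm] at hfar
  linarith [min_le_right 1 (ε z / 2)]

theorem finsum_eventuallyEq_of_separated {ρ : Z → ℝ}
    (hsep : ∀ z z' : Z, z ≠ z' → 2 * ρ z ≤ dist (z : E) z') {φ : Z → E → ℝ}
    (hsupp : ∀ z, Function.support (φ z) ⊆ ball (z : E) (ρ z)) (z : Z) (hz : 0 < ρ z) :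
    (fun y => ∑ᶠ z', φ z' y) =ᶠ[𝓝 (z : E)] φ z := by
  filter_upwards [ball_mem_nhds _ hz] with y hy
  refine finsum_eq_single (fun z' => φ z' y) z fun z' hz' => Function.notMem_support.mp fun h => ?_
  have hy' := mem_ball.1 (hsupp z' h)
  have := hsep z' z hz'
  have := hsep z z' (Ne.symm hz')
  have := dist_triangle_left (z' : E) z y
  rw [mem_ball] at hy
  linarith [dist_comm (z : E) z']

theorem finite_setOf_ball_inter_nonempty [ProperSpace E] (hZ : IsDiscrete Z) {ρ : Z → ℝ}
    (hρ1 : ∀ z, ρ z ≤ 1) (hsep : ∀ z z' : Z, z ≠ z' → 2 * ρ z ≤ dist (z : E) z') {x : E} {ε : ℝ}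
    (hε : 0 < ε) (hx : ∀ z ∈ Z, dist z x < ε → z = x) :
    {z : Z | (ball (z : E) (ρ z) ∩ ball x (ε / 2)).Nonempty}.Finite := by
  set S := {z : Z | (ball (z : E) (ρ z) ∩ ball x (ε / 2)).Nonempty}
  have hfar : ∀ z ∈ S, (z : E) ≠ x → ε / 2 < ρ z ∧ dist (z : E) x ≤ 1 + ε := by
    rintro z ⟨y, hyz, hyx⟩ hzx
    have h₁ : ε ≤ dist (z : E) x := not_lt.1 fun h => hzx (hx z z.2 h)
    have h₂ := dist_triangle_left (z : E) x y
    rw [mem_ball] at hyz hyx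
    constructor <;> linarith [hρ1 z]
  set T := Subtype.val '' (S \ {z | (z : E) = x})
  have hT : T.Finite := by
    have hsepT : T.Pairwise fun p q => ε ≤ dist p q := by
      rintro _ ⟨z, hz, rfl⟩ _ ⟨z', -, rfl⟩ hzz'
      have := hsep z z' fun h => hzz' (congrArg Subtype.val h)
      linarith [(hfar z hz.1 hz.2).1]
    have hTball : T ⊆ closedBall x (1 + ε) := by
      rintro _ ⟨z, hz, rfl⟩
      exact (hfar z hz.1 hz.2).2
    exact (finite_isBounded_inter_isClosed (hZ.mono (by simp [T])) isBounded_closedBall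
      (isClosed_of_pairwise_le_dist hε hsepT)).subset fun p hp => ⟨hTball hp, hp⟩
  refine ((hT.of_finite_image Subtype.val_injective.injOn).union
    ((Set.finite_singleton x).preimage Subtype.val_injective.injOn)).subset fun z hz => ?_
  by_cases hzx : (z : E) = x
  · exact Or.inr hzx
  · exact Or.inl ⟨hz, hzx⟩

theorem contDiffAt_finsum_of_separated [NormedSpace ℝ E] [ProperSpace E] (hZ : IsDiscrete Z)
    {ρ : Z → ℝ} (hρ1 : ∀ z, ρ z ≤ 1) (hsep : ∀ z z' : Z, z ≠ z' → 2 * ρ z ≤ dist (z : E) z')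
    {φ : Z → E → ℝ} {n : WithTop ℕ∞} (hφ : ∀ z, ContDiff ℝ n (φ z))
    (hsupp : ∀ z, Function.support (φ z) ⊆ ball (z : E) (ρ z)) {x : E}
    (hx : ∃ ε > 0, ∀ z ∈ Z, dist z x < ε → z = x) :
    ContDiffAt ℝ n (fun y => ∑ᶠ z, φ z y) x := by
  obtain ⟨ε, hε, hx⟩ := hx
  have hfin := finite_setOf_ball_inter_nonempty hZ hρ1 hsep hε hx
  have hlocal : (fun y => ∑ᶠ z, φ z y) =ᶠ[𝓝 x] fun y => ∑ z ∈ hfin.toFinset, φ z y := by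
    filter_upwards [ball_mem_nhds x (half_pos hε)] with y hy
    exact finsum_eq_sum_of_support_subset _ fun z hz => hfin.mem_toFinset.2 ⟨y, hsupp z hz, hy⟩
  exact (ContDiff.sum fun z _ => hφ z).contDiffAt.congr_of_eventuallyEq hlocal

end Gluing

theorem multipoint_borel_lemma_general {m : ℕ}
    (U : Set (Fin m → ℝ))
    (Z : Set (Fin m → ℝ))
    (hZclosed : ∀ x ∈ U, x ∈ closure Z → x ∈ Z)
    (hZdiscrete : DiscreteTopology Z)
    (a : Z → (Fin m → ℕ) → ℝ) :
    ∃ f : (Fin m → ℝ) → ℝ,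
      (∀ x ∈ U, ContDiffAt ℝ (⊤ : ℕ∞) f x) ∧
      ∀ (z : Z) (k : Fin m → ℕ), pderivMulti k f z = a z k := by
  have hZ : IsDiscrete Z := ⟨hZdiscrete⟩
  obtain ⟨ρ, hρ⟩ := hZ.exists_separating_radius
  choose hρpos hρ1 hsep using hρ
  choose φ hφ hsupp hder using fun z : Z => exists_borel_at (z : Fin m → ℝ) (a z) (hρpos z)
  refine ⟨fun x => ∑ᶠ z, φ z x, fun x hx => ?_, fun z k => ?_⟩
  · exact contDiffAt_finsum_of_separated hZ hρ1 hsep hφ hsupp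
      (hZ.exists_pos_eq_of_dist_lt (hZclosed x hx))
  · rw [((finsum_eventuallyEq_of_separated hsep hsupp z (hρpos z)).pderivMulti k).eq_of_nhds]
    exact hder z k

/-- multi-point Borel lemma.  Let `Z` be a discrete, relatively closed
subset of an open set `U ⊆ ℝ^m`.  Arbitrary Taylor series can be prescribed simultaneously
at all points of `Z`: for every `a : Z × ℕ^m → ℝ` there is `f ∈ C^∞(U)` with
`∂^k f(z) = a(z, k)` for all `z ∈ Z` and all multi-indices `k`. -/
theorem multipoint_borel_lemma {m : ℕ}
    (U : Set (Fin m → ℝ)) (hU : IsOpen U)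
    (Z : Set (Fin m → ℝ)) (hZU : Z ⊆ U)
    (hZclosed : ∀ x ∈ U, x ∈ closure Z → x ∈ Z)
    (hZdiscrete : DiscreteTopology Z)
    (a : Z → (Fin m → ℕ) → ℝ) :
    ∃ f : (Fin m → ℝ) → ℝ,
      (∀ x ∈ U, ContDiffAt ℝ (⊤ : ℕ∞) f x) ∧
      ∀ (z : Z) (k : Fin m → ℕ), pderivMulti k f z = a z k :=
  multipoint_borel_lemma_general U Z hZclosed hZdiscrete a

end
end

section
/- Let B̄ ⊆ ℝ^m be a closed ball, Z ⊆ B̄ a nonempty closed set, and j ≥ 1 an integer. Let g be a smooth real-valued function defined on an open set containing B̄, and suppose that for every z ∈ Z and every i < j the i-th iterated Fréchet derivative of g at z is zero. Then there exists a constant C > 0 such that for every x ∈ B̄ and every i < j, the operator norm of the i-th iterated Fréchet derivative of g at x is at most C · dist(x, Z)^{j−i}, where dist(x, Z) is the infimum of distances from x to points of Z. -/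
/-!
Let `M` bound `‖D^j g‖` on the ball. If `‖D^(i+1) g‖ ≤ M · dist(·, Z)^k` on the ball, then for
`x` in the ball and a nearest point `z ∈ Z`, the mean value inequality on the segment `[z, x]`
(which stays in the ball and along which `dist(·, Z) ≤ dist(x, Z) = ‖x - z‖`) together with
`D^i g(z) = 0` gives `‖D^i g(x)‖ ≤ M · dist(x, Z)^(k+1)`. Descending from `i = j` with the same
constant `M` yields all the bounds.
-/

open Metric

variable {E F : Type*} [NormedAddCommGroup E] [NormedSpace ℝ E]
  [NormedAddCommGroup F] [NormedSpace ℝ F] {s Z : Set E}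

theorem infDist_le_of_mem_segment {x y z : E} (hz : z ∈ Z) (hxz : infDist x Z = dist x z)
    (hy : y ∈ segment ℝ z x) : infDist y Z ≤ infDist x Z :=
  calc infDist y Z ≤ dist y z := infDist_le_dist_of_mem hz
    _ ≤ dist x z := by simpa [dist_comm] using segment_subset_closedBall_left z x hy
    _ = infDist x Z := hxz.symm

theorem norm_le_mul_infDist_pow_succ_of_norm_fderiv_le [ProperSpace E] {f : E → F} {C : ℝ}
    {n : ℕ} (hs : Convex ℝ s) (hZs : Z ⊆ s) (hZ : IsClosed Z) (hZne : Z.Nonempty) (hC : 0 ≤ C)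
    (hf : ∀ y ∈ s, DifferentiableAt ℝ f y) (hfZ : ∀ z ∈ Z, f z = 0)
    (hf' : ∀ y ∈ s, ‖fderiv ℝ f y‖ ≤ C * infDist y Z ^ n) {x : E} (hx : x ∈ s) :
    ‖f x‖ ≤ C * infDist x Z ^ (n + 1) := by
  obtain ⟨z, hz, hxz⟩ := hZ.exists_infDist_eq_dist hZne x
  have hseg : segment ℝ z x ⊆ s := hs.segment_subset (hZs hz) hx
  have hbound : ∀ y ∈ segment ℝ z x, ‖fderiv ℝ f y‖ ≤ C * infDist x Z ^ n := fun y hy =>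
    (hf' y (hseg hy)).trans <| by
      gcongr
      · exact infDist_nonneg
      · exact infDist_le_of_mem_segment hz hxz hy
  have hmvt := (convex_segment z x).norm_image_sub_le_of_norm_fderiv_le
    (fun y hy => hf y (hseg hy)) hbound (left_mem_segment ℝ z x) (right_mem_segment ℝ z x)
  rw [hfZ z hz, sub_zero, ← dist_eq_norm, ← hxz] at hmvt
  rwa [pow_succ, ← mul_assoc]

theorem norm_iteratedFDeriv_le_mul_infDist_pow [ProperSpace E] {g : E → F} {j : ℕ} {M : ℝ}
    (hs : Convex ℝ s) (hZs : Z ⊆ s) (hZ : IsClosed Z) (hZne : Z.Nonempty)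
    (hg : ∀ x ∈ s, ContDiffAt ℝ j g x) (hflat : ∀ z ∈ Z, ∀ i < j, iteratedFDeriv ℝ i g z = 0)
    (hM : 0 ≤ M) (hgM : ∀ x ∈ s, ‖iteratedFDeriv ℝ j g x‖ ≤ M) :
    ∀ i ≤ j, ∀ x ∈ s, ‖iteratedFDeriv ℝ i g x‖ ≤ M * infDist x Z ^ (j - i) := by
  suffices h : ∀ k ≤ j, ∀ x ∈ s, ‖iteratedFDeriv ℝ (j - k) g x‖ ≤ M * infDist x Z ^ k by
    intro i hi x hx
    have hji := h (j - i) (Nat.sub_le j i) x hx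
    rwa [Nat.sub_sub_self hi] at hji
  intro k
  induction k with
  | zero => simpa using hgM
  | succ k ih =>
    intro hk x hx
    have hjk : j - k = j - (k + 1) + 1 := by omega
    refine norm_le_mul_infDist_pow_succ_of_norm_fderiv_le hs hZs hZ hZne hM
      (fun y hy => (hg y hy).differentiableAt_iteratedFDeriv (by exact_mod_cast (by omega)))
      (fun z hz => hflat z hz _ (by omega)) (fun y hy => ?_) hx
    rw [norm_fderiv_iteratedFDeriv, ← hjk]
    exact ih (by omega) y hy

theorem derivative_bounds_near_zero_locus_general {m : ℕ}
    (c : Fin m → ℝ) (R : ℝ)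
    (Z : Set (Fin m → ℝ)) (hZne : Z.Nonempty) (hZclosed : IsClosed Z)
    (hZB : Z ⊆ Metric.closedBall c R)
    (j : ℕ)
    (O : Set (Fin m → ℝ)) (hBO : Metric.closedBall c R ⊆ O)
    (g : (Fin m → ℝ) → ℝ) (hg : ∀ x ∈ O, ContDiffAt ℝ (⊤ : ℕ∞) g x)
    (hflat : ∀ z ∈ Z, ∀ i < j, iteratedFDeriv ℝ i g z = 0) :
    ∃ C > (0 : ℝ), ∀ x ∈ Metric.closedBall c R, ∀ i < j,
      ‖iteratedFDeriv ℝ i g x‖ ≤ C * Metric.infDist x Z ^ (j - i) := by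
  have hgj : ∀ x ∈ closedBall c R, ContDiffAt ℝ j g x := fun x hx =>
    (hg x (hBO hx)).of_le (by exact_mod_cast le_top)
  obtain ⟨M, hM⟩ := (isCompact_closedBall c R).exists_bound_of_continuousOn fun x hx =>
    ((hgj x hx).continuousAt_iteratedFDeriv le_rfl).continuousWithinAt
  refine ⟨max M 1, by positivity, fun x hx i hi => ?_⟩
  exact norm_iteratedFDeriv_le_mul_infDist_pow (convex_closedBall c R) hZB hZclosed hZne hgj
    hflat (zero_le_one.trans (le_max_right M 1)) (fun y hy => (hM y hy).trans (le_max_left M 1))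
    i hi.le x hx

/-- Taylor-type bounds near the vanishing locus.  Let `B̄` be a closed
ball in `ℝ^m`, `Z ⊆ B̄` a nonempty closed set, and `g` a smooth function on an open set
containing `B̄` all of whose derivatives of order `< j` vanish on `Z`.  Then there is a
constant `C > 0` with `‖D^i g(x)‖ ≤ C · dist(x, Z)^{j−i}` for all `x ∈ B̄` and `i < j`. -/
theorem derivative_bounds_near_zero_locus {m : ℕ}
    (c : Fin m → ℝ) (R : ℝ)
    (Z : Set (Fin m → ℝ)) (hZne : Z.Nonempty) (hZclosed : IsClosed Z)
    (hZB : Z ⊆ Metric.closedBall c R)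
    (j : ℕ) (hj : 1 ≤ j)
    (O : Set (Fin m → ℝ)) (hO : IsOpen O) (hBO : Metric.closedBall c R ⊆ O)
    (g : (Fin m → ℝ) → ℝ) (hg : ∀ x ∈ O, ContDiffAt ℝ (⊤ : ℕ∞) g x)
    (hflat : ∀ z ∈ Z, ∀ i < j, iteratedFDeriv ℝ i g z = 0) :
    ∃ C > (0 : ℝ), ∀ x ∈ Metric.closedBall c R, ∀ i < j,
      ‖iteratedFDeriv ℝ i g x‖ ≤ C * Metric.infDist x Z ^ (j - i) :=
  derivative_bounds_near_zero_locus_general c R Z hZne hZclosed hZB j O hBO g hg hflat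
end
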